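/- Let Γ and Δ be maximally EDL-consistent sets. If s(Γ,a) = s(Δ,a) for all agents a ∈ Ag, then Γ = Δ. -/
import Mathlib


namespace DoxHG

/-- Formulas of the epistemic-doxastic language `L_KB`. -/
inductive Form (Ag Atom : Type) : Type
  | atom : Atom → Form Ag Atom
  | neg  : Form Ag Atom → Form Ag Atom
  | and  : Form Ag Atom → Form Ag Atom → Form Ag Atom
  | B    : Ag → Form Ag Atom → Form Ag Atom
  | K    : Ag → Form Ag Atom → Form Ag Atom

namespace Form

variable {Ag Atom : Type}

/-- φ ∨ ψ := ¬(¬φ ∧ ¬ψ) -/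
def or (φ ψ : Form Ag Atom) : Form Ag Atom := .neg (.and (.neg φ) (.neg ψ))

/-- φ → ψ := ¬φ ∨ ψ -/
def imp (φ ψ : Form Ag Atom) : Form Ag Atom := Form.or (.neg φ) ψ

/-- φ ↔ ψ -/
def biimp (φ ψ : Form Ag Atom) : Form Ag Atom := .and (φ.imp ψ) (ψ.imp φ)

/-- ⊥ := p ∧ ¬p for an arbitrary but fixed propositional variable p. -/
def bot [Inhabited Atom] : Form Ag Atom := .and (.atom default) (.neg (.atom default))

/-- Membership in the doxastic fragment `L_B` (no knowledge operators). -/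
def noK : Form Ag Atom → Prop
  | .atom _  => True
  | .neg φ   => φ.noK
  | .and φ ψ => φ.noK ∧ ψ.noK
  | .B _ φ   => φ.noK
  | .K _ _   => False

/-- φ is an `a`-formula: all variables are local variables of `a` (as given by
`owner`) and all modal operators are `B a` or `K a`. -/
def isAFormula (owner : Atom → Ag) (a : Ag) : Form Ag Atom → Prop
  | .atom p  => owner p = a
  | .neg φ   => φ.isAFormula owner a
  | .and φ ψ => φ.isAFormula owner a ∧ ψ.isAFormula owner a
  | .B b φ   => b = a ∧ φ.isAFormula owner a
  | .K b φ   => b = a ∧ φ.isAFormula owner a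

end Form

/-- φ is (an instance of) a classical propositional tautology: it evaluates to
true under every boolean valuation that respects negation and conjunction
(treating atoms and modal formulas as opaque). -/
def Tautology {Ag Atom : Type} (φ : Form Ag Atom) : Prop :=
  ∀ v : Form Ag Atom → Bool,
    (∀ ψ, v (.neg ψ) = !v ψ) →
    (∀ ψ χ, v (.and ψ χ) = (v ψ && v χ)) →
    v φ = true

/-! ### Doxastic Kripke models -/

/-- A doxastic Kripke model (with set of worlds the type `W`, assumed nonempty
where required): doxastic accessibility relations `B a` and valuation `V`. -/
structure KModel (Ag Atom W : Type) where
  B : Ag → W → W → Prop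
  V : W → Set Atom

section Kripke

variable {Ag Atom W : Type}

/-- Kripke satisfaction `⊨ₖ`; `K a` is interpreted via the equivalence relation
generated by `B a` (i.e. `Relation.EqvGen`, the smallest equivalence relation
containing it). -/
def ksat (M : KModel Ag Atom W) : W → Form Ag Atom → Prop
  | w, .atom p  => p ∈ M.V w
  | w, .neg φ   => ¬ ksat M w φ
  | w, .and φ ψ => ksat M w φ ∧ ksat M w ψ
  | w, .B a φ   => ∀ u, M.B a w u → ksat M u φ
  | w, .K a φ   => ∀ u, Relation.EqvGen (M.B a) w u → ksat M u φ

def KModel.Serial (M : KModel Ag Atom W) : Prop := ∀ (a : Ag) (w : W), ∃ u, M.B a w u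

def KModel.Transit (M : KModel Ag Atom W) : Prop :=
  ∀ (a : Ag) (u v w : W), M.B a u v → M.B a v w → M.B a u w

def KModel.Eucl (M : KModel Ag Atom W) : Prop :=
  ∀ (a : Ag) (u v w : W), M.B a u v → M.B a u w → M.B a v w

/-- Locality: worlds related by `B a ∪ (B a)⁻¹` agree on the local variables of `a`. -/
def KModel.Local (owner : Atom → Ag) (M : KModel Ag Atom W) : Prop :=
  ∀ (a : Ag) (u v : W), (M.B a u v ∨ M.B a v u) →
    M.V u ∩ {p | owner p = a} = M.V v ∩ {p | owner p = a}

/-- Properness: distinct worlds are distinguished by some agent. -/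
def KModel.Proper (M : KModel Ag Atom W) : Prop :=
  ∀ u v : W, u ≠ v → ∃ a : Ag, ¬ Relation.EqvGen (M.B a) u v

end Kripke

/-! ### The Hilbert systems EDL, LocK45 and LocKD45 -/

section ProofSystems

variable {Ag Atom : Type}

/-- Provability in the Hilbert system EDL. -/
inductive EDLProv (owner : Atom → Ag) : Form Ag Atom → Prop
  | taut {φ : Form Ag Atom} : Tautology φ → EDLProv owner φ
  | axKB (a : Ag) (φ ψ : Form Ag Atom) :
      EDLProv owner ((Form.B a (φ.imp ψ)).imp ((Form.B a φ).imp (Form.B a ψ)))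
  | axDB (a : Ag) (φ : Form Ag Atom) :
      EDLProv owner (Form.neg (Form.B a (Form.and φ (Form.neg φ))))
  | ax4B (a : Ag) (φ : Form Ag Atom) :
      EDLProv owner ((Form.B a φ).imp (Form.B a (Form.B a φ)))
  | ax5B (a : Ag) (φ : Form Ag Atom) :
      EDLProv owner ((Form.neg (Form.B a φ)).imp (Form.B a (Form.neg (Form.B a φ))))
  | axKK (a : Ag) (φ ψ : Form Ag Atom) :
      EDLProv owner ((Form.K a (φ.imp ψ)).imp ((Form.K a φ).imp (Form.K a ψ)))
  | axTK (a : Ag) (φ : Form Ag Atom) :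
      EDLProv owner ((Form.K a φ).imp φ)
  | ax4K (a : Ag) (φ : Form Ag Atom) :
      EDLProv owner ((Form.K a φ).imp (Form.K a (Form.K a φ)))
  | ax5K (a : Ag) (φ : Form Ag Atom) :
      EDLProv owner ((Form.neg (Form.K a φ)).imp (Form.K a (Form.neg (Form.K a φ))))
  | axPI (a : Ag) (φ : Form Ag Atom) :
      EDLProv owner ((Form.B a φ).imp (Form.K a (Form.B a φ)))
  | axNI (a : Ag) (φ : Form Ag Atom) :
      EDLProv owner ((Form.neg (Form.B a φ)).imp (Form.K a (Form.neg (Form.B a φ))))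
  | axKIB (a : Ag) (φ : Form Ag Atom) :
      EDLProv owner ((Form.K a φ).imp (Form.B a φ))
  | axLoc (a : Ag) (p : Atom) (h : owner p = a) :
      EDLProv owner (Form.and ((Form.atom p).imp (Form.B a (Form.atom p)))
        ((Form.neg (Form.atom p)).imp (Form.B a (Form.neg (Form.atom p)))))
  | mp {φ ψ : Form Ag Atom} :
      EDLProv owner (φ.imp ψ) → EDLProv owner φ → EDLProv owner ψ
  | nec (a : Ag) {φ : Form Ag Atom} : EDLProv owner φ → EDLProv owner (Form.K a φ)

/-- Provability in the Hilbert systems over the doxastic fragment `L_B`: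
`BProv owner true` is LocKD45 (with axiom D_B) and `BProv owner false` is
LocK45 (without D_B). -/
inductive BProv (owner : Atom → Ag) (withD : Bool) : Form Ag Atom → Prop
  | taut {φ : Form Ag Atom} : φ.noK → Tautology φ → BProv owner withD φ
  | axKB (a : Ag) {φ ψ : Form Ag Atom} (hφ : φ.noK) (hψ : ψ.noK) :
      BProv owner withD ((Form.B a (φ.imp ψ)).imp ((Form.B a φ).imp (Form.B a ψ)))
  | axDB (a : Ag) {φ : Form Ag Atom} (hD : withD = true) (hφ : φ.noK) :
      BProv owner withD (Form.neg (Form.B a (Form.and φ (Form.neg φ))))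
  | ax4B (a : Ag) {φ : Form Ag Atom} (hφ : φ.noK) :
      BProv owner withD ((Form.B a φ).imp (Form.B a (Form.B a φ)))
  | ax5B (a : Ag) {φ : Form Ag Atom} (hφ : φ.noK) :
      BProv owner withD ((Form.neg (Form.B a φ)).imp (Form.B a (Form.neg (Form.B a φ))))
  | axLoc (a : Ag) (p : Atom) (h : owner p = a) :
      BProv owner withD (Form.and ((Form.atom p).imp (Form.B a (Form.atom p)))
        ((Form.neg (Form.atom p)).imp (Form.B a (Form.neg (Form.atom p)))))
  | mp {φ ψ : Form Ag Atom} :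
      BProv owner withD (φ.imp ψ) → BProv owner withD φ → BProv owner withD ψ
  | nec (a : Ag) {φ : Form Ag Atom} : BProv owner withD φ → BProv owner withD (Form.B a φ)

/-- Conjunction of a finite list of formulas (the empty conjunction is ¬⊥). -/
def conj [Inhabited Atom] : List (Form Ag Atom) → Form Ag Atom
  | []        => Form.neg Form.bot
  | [φ]       => φ
  | φ :: rest => Form.and φ (conj rest)

/-- Γ ⊢ φ in EDL: some finite subset Δ ⊆ Γ has EDL ⊢ (⋀Δ) → φ. -/
def ProvFrom [Inhabited Atom] (owner : Atom → Ag) (Γ : Set (Form Ag Atom))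
    (φ : Form Ag Atom) : Prop :=
  ∃ L : List (Form Ag Atom), (∀ ψ ∈ L, ψ ∈ Γ) ∧ EDLProv owner ((conj L).imp φ)

/-- Γ is EDL-consistent. -/
def EDLConsistent [Inhabited Atom] (owner : Atom → Ag) (Γ : Set (Form Ag Atom)) : Prop :=
  ¬ ProvFrom owner Γ Form.bot

/-- Γ is maximally EDL-consistent. -/
def MaxEDLConsistent [Inhabited Atom] (owner : Atom → Ag) (Γ : Set (Form Ag Atom)) : Prop :=
  EDLConsistent owner Γ ∧ ∀ Δ : Set (Form Ag Atom), Γ ⊂ Δ → ¬ EDLConsistent owner Δ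

end ProofSystems

/-! ### Directed hypergraph models -/

/-- The undirected hyperedge `ē = T(e) ∪ H(e)` induced by a directed hyperedge
`e = (T(e), H(e))`. -/
def ebar {V : Type} (e : Set V × Set V) : Set V := e.1 ∪ e.2

/-- A (directed) hypergraph model: a vertex set, a set of directed hyperedges
(pairs (tail, head)), a coloring and a valuation.  Well-formedness conditions
are stated separately. -/
structure HModel (Ag Atom V : Type) where
  Vset : Set V
  E : Set (Set V × Set V)
  χ : V → Ag
  ℓ : V → Set Atom

namespace HModel

variable {Ag Atom V : Type}

/-- `(Vset, E)` is a directed hypergraph: the vertex set is nonempty and every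
hyperedge consists of a finite tail and a finite head, disjoint from each
other, both made of vertices. -/
def IsHypergraph (M : HModel Ag Atom V) : Prop :=
  M.Vset.Nonempty ∧
    ∀ e ∈ M.E, e.1 ⊆ M.Vset ∧ e.2 ⊆ M.Vset ∧ e.1.Finite ∧ e.2.Finite ∧ Disjoint e.1 e.2

/-- χ is a coloring: distinct vertices of the same hyperedge get distinct colors. -/
def IsChromatic (M : HModel Ag Atom V) : Prop :=
  ∀ e ∈ M.E, Set.InjOn M.χ (ebar e)

/-- The valuation assigns to an `a`-colored vertex only local variables of `a`. -/
def ValOk (owner : Atom → Ag) (M : HModel Ag Atom V) : Prop :=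
  ∀ v ∈ M.Vset, M.ℓ v ⊆ {p | owner p = M.χ v}

/-- M is a (well-formed, chromatic) hypergraph model. -/
def IsModel (owner : Atom → Ag) (M : HModel Ag Atom V) : Prop :=
  M.IsHypergraph ∧ M.IsChromatic ∧ M.ValOk owner

/-- Simplicity: for distinct hyperedges, `ē₁ ⊄ ē₂`. -/
def Simple (M : HModel Ag Atom V) : Prop :=
  ∀ e₁ ∈ M.E, ∀ e₂ ∈ M.E, e₁ ≠ e₂ → ¬ ebar e₁ ⊆ ebar e₂

/-- n-uniformity: every hyperedge has exactly `n` vertices. -/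
def Uniform (M : HModel Ag Atom V) (n : ℕ) : Prop :=
  ∀ e ∈ M.E, (ebar e).ncard = n

/-- Tail-completeness: every vertex lies in the tail of some hyperedge. -/
def TailComplete (M : HModel Ag Atom V) : Prop :=
  ∀ v ∈ M.Vset, ∃ e ∈ M.E, v ∈ e.1

end HModel

section HSemantics

variable {Ag Atom V : Type}

/-- The doxastic accessibility relation `B^G_a` between hyperedges:
some `a`-colored vertex lies in `ē₁ ∩ T(e₂)`. -/
def Bacc (M : HModel Ag Atom V) (a : Ag) (e₁ e₂ : Set V × Set V) : Prop :=
  ∃ u : V, M.χ u = a ∧ u ∈ ebar e₁ ∧ u ∈ e₂.1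

/-- The epistemic accessibility relation `K^G_a` between hyperedges:
some `a`-colored vertex lies in `ē₁ ∩ ē₂`. -/
def Kacc (M : HModel Ag Atom V) (a : Ag) (e₁ e₂ : Set V × Set V) : Prop :=
  ∃ u : V, M.χ u = a ∧ u ∈ ebar e₁ ∧ u ∈ ebar e₂

/-- `ℓ(e) = ⋃_{u ∈ ē} ℓ(u)`. -/
def elabel (M : HModel Ag Atom V) (e : Set V × Set V) : Set Atom :=
  ⋃ u ∈ ebar e, M.ℓ u

/-- Hypergraph satisfaction `⊨ₕ`. -/
def hsat (M : HModel Ag Atom V) : Set V × Set V → Form Ag Atom → Prop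
  | e, .atom p  => p ∈ elabel M e
  | e, .neg φ   => ¬ hsat M e φ
  | e, .and φ ψ => hsat M e φ ∧ hsat M e ψ
  | e, .B a φ   => ∀ e' ∈ M.E, Bacc M a e e' → hsat M e' φ
  | e, .K a φ   => ∀ e' ∈ M.E, Kacc M a e e' → hsat M e' φ

end HSemantics

end DoxHG

namespace DoxHG

section Canonical

variable {Ag Atom : Type}

/-- `Γ^{B_a} := {φ | B_aφ ∈ Γ}`. -/
def projB (Γ : Set (Form Ag Atom)) (a : Ag) : Set (Form Ag Atom) := {φ | Form.B a φ ∈ Γ}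

/-- `Γ^{K_a} := {φ | K_aφ ∈ Γ}`. -/
def projK (Γ : Set (Form Ag Atom)) (a : Ag) : Set (Form Ag Atom) := {φ | Form.K a φ ∈ Γ}

/-- `V_a(Γ) := Γ ∩ Var_a` (as a set of atomic formulas). -/
def Vform (owner : Atom → Ag) (Γ : Set (Form Ag Atom)) (a : Ag) : Set (Form Ag Atom) :=
  {ψ | ψ ∈ Γ ∧ ∃ p : Atom, owner p = a ∧ ψ = Form.atom p}

/-- `B̂_a(Γ) := {B_aφ | B_aφ ∈ Γ}`. -/
def Bhat (Γ : Set (Form Ag Atom)) (a : Ag) : Set (Form Ag Atom) :=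
  {ψ | ψ ∈ Γ ∧ ∃ φ : Form Ag Atom, ψ = Form.B a φ}

/-- `s(Γ,a) := V_a(Γ) ∪ B̂_a(Γ)`. -/
def sSet (owner : Atom → Ag) (Γ : Set (Form Ag Atom)) (a : Ag) : Set (Form Ag Atom) :=
  Vform owner Γ a ∪ Bhat Γ a

/-- The canonical vertex `s(Γ,a)`, tagged with its color `a`. -/
def cvert (owner : Atom → Ag) (Γ : Set (Form Ag Atom)) (a : Ag) :
    Ag × Set (Form Ag Atom) :=
  (a, sSet owner Γ a)

/-- `T(Γ) := {s(Γ,b) | b ∈ Ag, Γ^{B_b} ⊆ Γ}`. -/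
def Tset (owner : Atom → Ag) (Γ : Set (Form Ag Atom)) : Set (Ag × Set (Form Ag Atom)) :=
  {v | ∃ b : Ag, projB Γ b ⊆ Γ ∧ v = cvert owner Γ b}

/-- `H(Γ) := {s(Γ,b) | b ∈ Ag, Γ^{B_b} ⊄ Γ}`. -/
def Hset (owner : Atom → Ag) (Γ : Set (Form Ag Atom)) : Set (Ag × Set (Form Ag Atom)) :=
  {v | ∃ b : Ag, ¬ projB Γ b ⊆ Γ ∧ v = cvert owner Γ b}

/-- The canonical hyperedge `e_Γ = (T(Γ), H(Γ))`. -/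
def cedge (owner : Atom → Ag) (Γ : Set (Form Ag Atom)) :
    Set (Ag × Set (Form Ag Atom)) × Set (Ag × Set (Form Ag Atom)) :=
  (Tset owner Γ, Hset owner Γ)

/-- The canonical hypergraph model `M^c` for EDL. -/
def canonHM [Inhabited Atom] (owner : Atom → Ag) :
    HModel Ag Atom (Ag × Set (Form Ag Atom)) where
  Vset := {v | ∃ Γ : Set (Form Ag Atom), MaxEDLConsistent owner Γ ∧ ∃ a : Ag, v = cvert owner Γ a}
  E := {e | ∃ Γ : Set (Form Ag Atom), MaxEDLConsistent owner Γ ∧ e = cedge owner Γ}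
  χ := Prod.fst
  ℓ := fun v => {p : Atom | Form.atom p ∈ v.2 ∧ owner p = v.1}

end Canonical

end DoxHG

namespace DoxHG

section Aux

variable {Ag Atom : Type}

/-! ### Boolean valuation lemmas -/

lemma v_imp (v : Form Ag Atom → Bool)
    (hneg : ∀ ψ, v (.neg ψ) = !v ψ)
    (hand : ∀ ψ χ, v (.and ψ χ) = (v ψ && v χ)) (φ ψ : Form Ag Atom) :
    v (φ.imp ψ) = (!v φ || v ψ) := by
  simp only [Form.imp, Form.or, hneg, hand, Bool.not_not, Bool.not_and]

lemma v_bot [Inhabited Atom] (v : Form Ag Atom → Bool)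
    (hneg : ∀ ψ, v (.neg ψ) = !v ψ)
    (hand : ∀ ψ χ, v (.and ψ χ) = (v ψ && v χ)) :
    v (Form.bot : Form Ag Atom) = false := by
  simp only [Form.bot, hand, hneg]
  cases v (Form.atom default) <;> simp

lemma v_conj [Inhabited Atom] (v : Form Ag Atom → Bool)
    (hneg : ∀ ψ, v (.neg ψ) = !v ψ)
    (hand : ∀ ψ χ, v (.and ψ χ) = (v ψ && v χ)) :
    ∀ L : List (Form Ag Atom), v (conj L) = L.all (fun ψ => v ψ)
  | [] => by simp [conj, hneg, v_bot v hneg hand]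
  | [φ] => by simp [conj]
  | φ :: ψ :: rest => by
      have ih := v_conj v hneg hand (ψ :: rest)
      simp only [conj, hand, ih, List.all_cons]

/-! ### Tautologies -/

lemma taut_id (φ : Form Ag Atom) : Tautology (φ.imp φ) := by
  intro v hneg hand
  rw [v_imp v hneg hand]
  cases v φ <;> simp

lemma taut_K (φ ψ : Form Ag Atom) : Tautology (φ.imp (ψ.imp φ)) := by
  intro v hneg hand
  simp only [v_imp v hneg hand]
  cases v φ <;> cases v ψ <;> simp

lemma taut_trans (A B C : Form Ag Atom) :
    Tautology ((A.imp B).imp ((B.imp C).imp (A.imp C))) := by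
  intro v hneg hand
  simp only [v_imp v hneg hand]
  cases v A <;> cases v B <;> cases v C <;> simp

lemma taut_frege (A B C : Form Ag Atom) :
    Tautology ((A.imp (B.imp C)).imp ((A.imp B).imp (A.imp C))) := by
  intro v hneg hand
  simp only [v_imp v hneg hand]
  cases v A <;> cases v B <;> cases v C <;> simp

lemma taut_chain4 (A B C D : Form Ag Atom) :
    Tautology ((A.imp (B.imp C)).imp ((C.imp D).imp (A.imp (B.imp D)))) := by
  intro v hneg hand
  simp only [v_imp v hneg hand]
  cases v A <;> cases v B <;> cases v C <;> cases v D <;> simp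

lemma taut_impbot_neg [Inhabited Atom] (φ : Form Ag Atom) :
    Tautology ((φ.imp Form.bot).imp (Form.neg φ)) := by
  intro v hneg hand
  simp only [v_imp v hneg hand, hneg, v_bot v hneg hand]
  cases v φ <;> simp

lemma taut_absurd [Inhabited Atom] (φ : Form Ag Atom) :
    Tautology (φ.imp ((Form.neg φ).imp Form.bot)) := by
  intro v hneg hand
  simp only [v_imp v hneg hand, hneg, v_bot v hneg hand]
  cases v φ <;> simp

lemma taut_and_left (φ ψ : Form Ag Atom) : Tautology ((φ.and ψ).imp φ) := by
  intro v hneg hand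
  simp only [v_imp v hneg hand, hand]
  cases v φ <;> cases v ψ <;> simp

lemma taut_and_right (φ ψ : Form Ag Atom) : Tautology ((φ.and ψ).imp ψ) := by
  intro v hneg hand
  simp only [v_imp v hneg hand, hand]
  cases v φ <;> cases v ψ <;> simp

lemma taut_and_intro (φ ψ : Form Ag Atom) : Tautology (φ.imp (ψ.imp (φ.and ψ))) := by
  intro v hneg hand
  simp only [v_imp v hneg hand, hand]
  cases v φ <;> cases v ψ <;> simp

lemma taut_neg_pair (χ : Form Ag Atom) :
    Tautology ((Form.neg χ).imp (χ.imp (χ.and (Form.neg χ)))) := by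
  intro v hneg hand
  simp only [v_imp v hneg hand, hneg, hand]
  cases v χ <;> simp

lemma taut_conj_imp_conj [Inhabited Atom] {L1 L2 : List (Form Ag Atom)}
    (h : ∀ ψ ∈ L2, ψ ∈ L1) : Tautology ((conj L1).imp (conj L2)) := by
  intro v hneg hand
  rw [v_imp v hneg hand, v_conj v hneg hand, v_conj v hneg hand]
  cases hc : L1.all (fun ψ => v ψ)
  · simp
  · simp only [Bool.not_true, Bool.false_or]
    rw [List.all_eq_true] at hc ⊢
    exact fun ψ hψ => hc ψ (h ψ hψ)

lemma taut_conj_imp_imp_conj [Inhabited Atom] {L' L : List (Form Ag Atom)}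
    {φ : Form Ag Atom} (h : ∀ ψ ∈ L, ψ ∈ L' ∨ ψ = φ) :
    Tautology ((conj L').imp (φ.imp (conj L))) := by
  intro v hneg hand
  rw [v_imp v hneg hand, v_imp v hneg hand, v_conj v hneg hand, v_conj v hneg hand]
  cases hc : L'.all (fun ψ => v ψ)
  · simp
  · cases hφ : v φ
    · simp
    · simp only [Bool.not_true, Bool.false_or]
      rw [List.all_eq_true] at hc ⊢
      intro ψ hψ
      rcases h ψ hψ with h' | rfl
      · exact hc ψ h'
      · exact hφ

/-! ### Provability helpers -/

lemma EDL_mp1 {owner : Atom → Ag} {A B : Form Ag Atom}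
    (t : Tautology (A.imp B)) (hA : EDLProv owner A) : EDLProv owner B :=
  EDLProv.mp (EDLProv.taut t) hA

lemma EDL_mp2 {owner : Atom → Ag} {A B C : Form Ag Atom}
    (t : Tautology (A.imp (B.imp C))) (hA : EDLProv owner A) (hB : EDLProv owner B) :
    EDLProv owner C :=
  EDLProv.mp (EDLProv.mp (EDLProv.taut t) hA) hB

variable [Inhabited Atom] {owner : Atom → Ag} {Γ Δ : Set (Form Ag Atom)}

lemma provFrom_of_mem {φ : Form Ag Atom} (h : φ ∈ Γ) : ProvFrom owner Γ φ :=
  ⟨[φ], by simpa using h, EDLProv.taut (taut_id φ)⟩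

lemma provFrom_of_thm {φ : Form Ag Atom} (h : EDLProv owner φ) : ProvFrom owner Γ φ :=
  ⟨[], by simp, EDL_mp1 (taut_K φ (conj [])) h⟩

lemma provFrom_mp {φ ψ : Form Ag Atom} (h1 : ProvFrom owner Γ (φ.imp ψ))
    (h2 : ProvFrom owner Γ φ) : ProvFrom owner Γ ψ := by
  obtain ⟨L1, hL1, hp1⟩ := h1
  obtain ⟨L2, hL2, hp2⟩ := h2
  refine ⟨L1 ++ L2, ?_, ?_⟩
  · intro χ hχ
    rcases List.mem_append.1 hχ with h | h
    · exact hL1 χ h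
    · exact hL2 χ h
  · have t1 : EDLProv owner ((conj (L1 ++ L2)).imp (conj L1)) :=
      EDLProv.taut (taut_conj_imp_conj (fun ψ hψ => List.mem_append.2 (Or.inl hψ)))
    have t2 : EDLProv owner ((conj (L1 ++ L2)).imp (conj L2)) :=
      EDLProv.taut (taut_conj_imp_conj (fun ψ hψ => List.mem_append.2 (Or.inr hψ)))
    have c1 : EDLProv owner ((conj (L1 ++ L2)).imp (φ.imp ψ)) :=
      EDL_mp2 (taut_trans _ _ _) t1 hp1
    have c2 : EDLProv owner ((conj (L1 ++ L2)).imp φ) :=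
      EDL_mp2 (taut_trans _ _ _) t2 hp2
    exact EDL_mp2 (taut_frege _ _ _) c1 c2

open Classical in
lemma imp_bot_of_not_mem (hΓ : MaxEDLConsistent owner Γ) {φ : Form Ag Atom}
    (h : φ ∉ Γ) : ProvFrom owner Γ (φ.imp Form.bot) := by
  have hss : Γ ⊂ insert φ Γ :=
    ⟨Set.subset_insert _ _, fun hsub => h (hsub (Set.mem_insert _ _))⟩
  have hincon := hΓ.2 _ hss
  rw [EDLConsistent, not_not] at hincon
  obtain ⟨L, hL, hp⟩ := hincon
  classical
  refine ⟨L.filter (fun ψ => decide (ψ ∈ Γ)), ?_, ?_⟩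
  · intro ψ hψ
    have := List.mem_filter.1 hψ
    exact of_decide_eq_true this.2
  · have hmem : ∀ ψ ∈ L, ψ ∈ L.filter (fun ψ => decide (ψ ∈ Γ)) ∨ ψ = φ := by
      intro ψ hψ
      rcases hL ψ hψ with h' | h'
      · exact Or.inr h'
      · exact Or.inl (List.mem_filter.2 ⟨hψ, decide_eq_true h'⟩)
    have t : EDLProv owner
        ((conj (L.filter (fun ψ => decide (ψ ∈ Γ)))).imp (φ.imp (conj L))) :=
      EDLProv.taut (taut_conj_imp_imp_conj hmem)
    exact EDL_mp2 (taut_chain4 _ _ _ _) t hp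

lemma mem_of_provFrom (hΓ : MaxEDLConsistent owner Γ) {φ : Form Ag Atom}
    (h : ProvFrom owner Γ φ) : φ ∈ Γ := by
  by_contra hφ
  exact hΓ.1 (provFrom_mp (imp_bot_of_not_mem hΓ hφ) h)

lemma mcs_thm (hΓ : MaxEDLConsistent owner Γ) {φ : Form Ag Atom}
    (h : EDLProv owner φ) : φ ∈ Γ :=
  mem_of_provFrom hΓ (provFrom_of_thm h)

lemma mcs_mp (hΓ : MaxEDLConsistent owner Γ) {φ ψ : Form Ag Atom}
    (h1 : φ.imp ψ ∈ Γ) (h2 : φ ∈ Γ) : ψ ∈ Γ :=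
  mem_of_provFrom hΓ (provFrom_mp (provFrom_of_mem h1) (provFrom_of_mem h2))

lemma mcs_not_both (hΓ : MaxEDLConsistent owner Γ) {φ : Form Ag Atom}
    (h1 : φ ∈ Γ) (h2 : Form.neg φ ∈ Γ) : False :=
  hΓ.1 (provFrom_mp (provFrom_mp (provFrom_of_thm (EDLProv.taut (taut_absurd φ)))
    (provFrom_of_mem h1)) (provFrom_of_mem h2))

lemma mcs_neg_mem (hΓ : MaxEDLConsistent owner Γ) {φ : Form Ag Atom}
    (h : φ ∉ Γ) : Form.neg φ ∈ Γ :=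
  mem_of_provFrom hΓ (provFrom_mp (provFrom_of_thm (EDLProv.taut (taut_impbot_neg φ)))
    (imp_bot_of_not_mem hΓ h))

lemma mcs_and_iff (hΓ : MaxEDLConsistent owner Γ) {φ ψ : Form Ag Atom} :
    Form.and φ ψ ∈ Γ ↔ φ ∈ Γ ∧ ψ ∈ Γ := by
  constructor
  · intro h
    exact ⟨mcs_mp hΓ (mcs_thm hΓ (EDLProv.taut (taut_and_left φ ψ))) h,
      mcs_mp hΓ (mcs_thm hΓ (EDLProv.taut (taut_and_right φ ψ))) h⟩
  · intro ⟨h1, h2⟩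
    exact mcs_mp hΓ (mcs_mp hΓ (mcs_thm hΓ (EDLProv.taut (taut_and_intro φ ψ))) h1) h2

/-! ### Transfer lemmas -/

lemma atom_transfer {p : Atom}
    (hs : sSet owner Γ (owner p) = sSet owner Δ (owner p))
    (hp : Form.atom p ∈ Γ) : Form.atom p ∈ Δ := by
  have hmem : (Form.atom p : Form Ag Atom) ∈ sSet owner Γ (owner p) :=
    Or.inl ⟨hp, p, rfl, rfl⟩
  rw [hs] at hmem
  rcases hmem with ⟨h1, _⟩ | ⟨_, φ', heq⟩
  · exact h1
  · exact absurd heq (by simp)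

lemma B_transfer {a : Ag} {ψ : Form Ag Atom}
    (hs : sSet owner Γ a = sSet owner Δ a)
    (hb : Form.B a ψ ∈ Γ) : Form.B a ψ ∈ Δ := by
  have hmem : (Form.B a ψ : Form Ag Atom) ∈ sSet owner Γ a :=
    Or.inr ⟨hb, ψ, rfl⟩
  rw [hs] at hmem
  rcases hmem with ⟨_, p, _, heq⟩ | ⟨h1, _⟩
  · exact absurd heq (by simp)
  · exact h1

lemma K_transfer (hΓ : MaxEDLConsistent owner Γ) (hΔ : MaxEDLConsistent owner Δ)
    {a : Ag} {φ : Form Ag Atom}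
    (hs : sSet owner Γ a = sSet owner Δ a)
    (hk : Form.K a φ ∈ Γ) : Form.K a φ ∈ Δ := by
  set χ := Form.K a φ with hχ
  have hKK : Form.K a χ ∈ Γ := mcs_mp hΓ (mcs_thm hΓ (EDLProv.ax4K a φ)) hk
  have hB : Form.B a χ ∈ Γ := mcs_mp hΓ (mcs_thm hΓ (EDLProv.axKIB a χ)) hKK
  have hBΔ : Form.B a χ ∈ Δ := B_transfer hs hB
  by_contra hnk
  have hnχ : Form.neg χ ∈ Δ := mcs_neg_mem hΔ hnk
  have hK5 : Form.K a (Form.neg χ) ∈ Δ :=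
    mcs_mp hΔ (mcs_thm hΔ (EDLProv.ax5K a φ)) hnχ
  have hBn : Form.B a (Form.neg χ) ∈ Δ :=
    mcs_mp hΔ (mcs_thm hΔ (EDLProv.axKIB a (Form.neg χ))) hK5
  -- derive B a (χ ∧ ¬χ) ∈ Δ
  have hBt : EDLProv owner (Form.B a ((Form.neg χ).imp (χ.imp (χ.and (Form.neg χ))))) :=
    EDLProv.mp (EDLProv.axKIB a _) (EDLProv.nec a (EDLProv.taut (taut_neg_pair χ)))
  have step1 : EDLProv owner
      ((Form.B a (Form.neg χ)).imp (Form.B a (χ.imp (χ.and (Form.neg χ))))) :=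
    EDLProv.mp (EDLProv.axKB a _ _) hBt
  have h2 : Form.B a (χ.imp (χ.and (Form.neg χ))) ∈ Δ :=
    mcs_mp hΔ (mcs_thm hΔ step1) hBn
  have h3 : (Form.B a χ).imp (Form.B a (χ.and (Form.neg χ))) ∈ Δ :=
    mcs_mp hΔ (mcs_thm hΔ (EDLProv.axKB a χ (χ.and (Form.neg χ)))) h2
  have h4 : Form.B a (χ.and (Form.neg χ)) ∈ Δ := mcs_mp hΔ h3 hBΔ
  have h5 : Form.neg (Form.B a (χ.and (Form.neg χ))) ∈ Δ :=
    mcs_thm hΔ (EDLProv.axDB a χ)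
  exact mcs_not_both hΔ h4 h5

end Aux

/-- If two maximally EDL-consistent sets have the same local
states `s(Γ,a) = s(Δ,a)` for all agents `a`, then they are equal. -/
theorem statement_7 {Ag Atom : Type} [Fintype Ag] [Nonempty Ag] [Countable Atom] [Inhabited Atom]
    (owner : Atom → Ag) (Γ Δ : Set (Form Ag Atom))
    (hΓ : MaxEDLConsistent owner Γ) (hΔ : MaxEDLConsistent owner Δ)
    (h : ∀ a : Ag, sSet owner Γ a = sSet owner Δ a) :
    Γ = Δ := by
  have key : ∀ φ : Form Ag Atom, φ ∈ Γ ↔ φ ∈ Δ := by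
    intro φ
    induction φ with
    | atom p =>
      exact ⟨fun hp => atom_transfer (h (owner p)) hp,
        fun hp => atom_transfer (h (owner p)).symm hp⟩
    | neg φ ih =>
      constructor
      · intro hm
        have : φ ∉ Γ := fun hφ => mcs_not_both hΓ hφ hm
        exact mcs_neg_mem hΔ (fun hφ => this (ih.2 hφ))
      · intro hm
        have : φ ∉ Δ := fun hφ => mcs_not_both hΔ hφ hm
        exact mcs_neg_mem hΓ (fun hφ => this (ih.1 hφ))
    | and φ ψ ihφ ihψ =>
      rw [mcs_and_iff hΓ, mcs_and_iff hΔ, ihφ, ihψ]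
    | B a φ _ =>
      exact ⟨fun hb => B_transfer (h a) hb, fun hb => B_transfer (h a).symm hb⟩
    | K a φ _ =>
      exact ⟨fun hk => K_transfer hΓ hΔ (h a) hk,
        fun hk => K_transfer hΔ hΓ (h a).symm hk⟩
  exact Set.ext key

end DoxHG
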